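/- arXiv:1802.07302 — 2 statements merged into one kernel-verified Lean document; each statement's English description precedes it below -/
import Mathlib

section
/- Let $V$ be a finite-dimensional vector space over a field of characteristic zero, and let $\Gamma$ be a torsion subgroup of $\mathrm{GL}(V)$ (every element has finite order). If $\Gamma$ is finitely generated, then $\Gamma$ is finite. -/
/-!
Let `A` be the finitely generated `ℤ`-algebra generated by the matrix entries of the generators
of `Γ` and of their inverses, so that `Γ` lies in `GL_n(A)`. Since `ℤ` is a Jacobson ring, the
residue fields of `A` at maximal ideals are finite, and as `A` has characteristic zero there are
two maximal ideals `m₁, m₂` whose residue characteristics differ. If `g ∈ GL_n(A)` satisfies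
`g ^ r = 1` and `g ≡ 1` modulo an ideal not containing the prime `r`, then
`(∑_{i<r} g^i) (g - 1) = 0` where the first factor has determinant `≡ r ^ n ≢ 0`, so `g = 1`.
Hence no element of prime order lies in the kernel of reduction to `GL_n(A/m₁) × GL_n(A/m₂)`,
so a torsion subgroup of `GL_n(A)` embeds into this finite group.
-/

open Finset

theorem Matrix.eq_one_of_pow_eq_one_of_map_eq_one {ι A F : Type*} [Fintype ι] [DecidableEq ι]
    [CommRing A] [IsDomain A] [CommRing F] (f : A →+* F) {r : ℕ} (hr : ¬IsNilpotent (r : F))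
    {M : Matrix ι ι A} (hM : M ^ r = 1) (hMf : M.map f = 1) : M = 1 := by
  set U := ∑ i ∈ range r, M ^ i
  have hU : U * (M - 1) = 0 := by rw [geom_sum_mul, hM, sub_self]
  have hUf : f.mapMatrix U = r := by
    simp only [U, map_sum, map_pow, RingHom.mapMatrix_apply, hMf, one_pow, sum_const, card_range,
      nsmul_one]
  have hdet : U.det ≠ 0 := fun h ↦ hr ⟨Fintype.card ι, by
    rw [← card_univ, ← prod_const, ← det_diagonal, diagonal_natCast, ← hUf, ← RingHom.map_det, h,
      map_zero]⟩
  have hsmul : U.det • (M - 1) = 0 := by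
    rw [← one_mul (M - 1), ← smul_mul_assoc, ← adjugate_mul, mul_assoc, hU, mul_zero]
  rw [← sub_eq_zero]
  ext i j
  simpa [hdet] using congrFun (congrFun hsmul i) j

theorem MonoidHom.injective_of_isMulTorsion {G H : Type*} [Group G] [Monoid H] (φ : G →* H)
    (hG : IsMulTorsion G)
    (hφ : ∀ g : G, ∀ r : ℕ, r.Prime → g ^ r = 1 → φ g = 1 → g = 1) : Function.Injective φ := by
  refine (injective_iff_map_eq_one φ).2 fun g hg ↦ ?_
  by_contra hg1
  obtain ⟨r, hr, hrg⟩ := Nat.exists_prime_and_dvd (mt orderOf_eq_one_iff.1 hg1)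
  set h := g ^ (orderOf g / r)
  have hord : orderOf h = r := orderOf_pow_orderOf_div (hG g).orderOf_pos.ne' hrg
  have h1 : h = 1 := hφ h r hr (hord ▸ pow_orderOf_eq_one h) (by rw [map_pow, hg, one_pow])
  exact hr.ne_one (by rw [← hord, h1, orderOf_one])

instance : IsJacobsonRing ℤ := by
  refine isJacobsonRing_iff_prime_eq.2 fun P hP ↦ ?_
  rcases eq_or_ne P ⊥ with rfl | hP0
  · refine le_antisymm (fun n hn ↦ ?_) Ideal.le_jacobson
    have h₁ := Int.isUnit_iff.1 (Ideal.mem_jacobson_bot.1 hn 1)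
    have h₂ := Int.isUnit_iff.1 (Ideal.mem_jacobson_bot.1 hn (-1))
    rw [Ideal.mem_bot]
    omega
  · have := hP.isMaximal hP0
    exact Ideal.jacobson_eq_self_of_isMaximal

theorem finite_of_surjective_of_finiteType_int {A K : Type*} [CommRing A] [Algebra.FiniteType ℤ A]
    [Field K] (f : A →+* K) (hf : Function.Surjective f) : Finite K := by
  have : Algebra.FiniteType ℤ K := .of_surjective f.toIntAlgHom hf
  have := finite_of_finite_type_of_isJacobsonRing ℤ K
  obtain ⟨p, hp⟩ := CharP.exists K
  rcases CharP.char_is_prime_or_zero K p with hprime | rfl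
  · refine Module.finite_of_fg_torsion K fun x ↦ ⟨⟨p, ?_⟩, ?_⟩
    · exact mem_nonZeroDivisors_of_ne_zero (by exact_mod_cast hprime.ne_zero)
    · simp [CharP.cast_eq_zero]
  · have := CharP.charP_to_charZero K
    exact (Int.not_isField (isField_of_isIntegral_of_isField
      (Int.cast_injective (α := K)) (Field.toIsField K))).elim

theorem exists_isMaximal_natCast_notMem_inf (A : Type*) [CommRing A] [IsDomain A] [CharZero A]
    [Algebra.FiniteType ℤ A] :
    ∃ m₁ m₂ : Ideal A, m₁.IsMaximal ∧ m₂.IsMaximal ∧ ∀ r : ℕ, r.Prime → (r : A) ∉ m₁ ⊓ m₂ := by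
  have : IsJacobsonRing A := isJacobsonRing_of_finiteType (A := ℤ)
  obtain ⟨m₁, hm₁⟩ := Ideal.exists_maximal A
  let := Ideal.Quotient.field m₁
  have := finite_of_surjective_of_finiteType_int _ (Ideal.Quotient.mk_surjective (I := m₁))
  set p := ringChar (A ⧸ m₁)
  have hp : p.Prime := CharP.prime_ringChar _
  obtain ⟨m₂, hm₂, hpm₂⟩ : ∃ m₂ : Ideal A, m₂.IsMaximal ∧ (p : A) ∉ m₂ := by
    have : (p : A) ∉ (⊥ : Ideal A).jacobson := by
      rw [IsJacobsonRing.out ‹_› Ideal.isRadical_bot, Ideal.mem_bot]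
      exact_mod_cast hp.ne_zero
    simpa [Ideal.jacobson, Ideal.mem_sInf] using this
  refine ⟨m₁, m₂, hm₁, hm₂, fun r hr hrm ↦ hpm₂ ?_⟩
  have hpr : p ∣ r := by
    rw [← ringChar.spec, ← map_natCast (Ideal.Quotient.mk m₁), Ideal.Quotient.eq_zero_iff_mem]
    exact hrm.1
  rw [(Nat.prime_dvd_prime_iff_eq hp hr).1 hpr]
  exact hrm.2

namespace Matrix.GeneralLinearGroup

variable {ι : Type*} [Fintype ι] [DecidableEq ι]

theorem mem_range_map_of_forall_mem {R S : Type*} [CommRing R] [CommRing S] [Algebra R S]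
    (A : Subalgebra R S) {g : GL ι S} (hg : ∀ i j, g i j ∈ A) (hg' : ∀ i j, g⁻¹ i j ∈ A) :
    g ∈ (map (algebraMap A S)).range := by
  have hinj : Function.Injective ((algebraMap A S).mapMatrix : Matrix ι ι A → Matrix ι ι S) :=
    Matrix.map_injective Subtype.val_injective
  refine ⟨⟨of fun i j ↦ ⟨g i j, hg i j⟩, of fun i j ↦ ⟨g⁻¹ i j, hg' i j⟩, hinj ?_, hinj ?_⟩,
    Units.ext rfl⟩
  · simp only [map_mul, map_one]
    exact g.mul_inv
  · simp only [map_mul, map_one]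
    exact g.inv_mul

theorem exists_fg_subalgebra_comp_map_eq {K G : Type*} [CommRing K] [Group G] [Group.FG G]
    (ρ : G →* GL ι K) :
    ∃ A : Subalgebra ℤ K, A.FG ∧ ∃ ρA : G →* GL ι A, (map (algebraMap A K)).comp ρA = ρ := by
  classical
  obtain ⟨S, hS⟩ := Group.FG.out (G := G)
  let entries : Finset K := (S ×ˢ univ ×ˢ univ).image (fun x ↦ ρ x.1 x.2.1 x.2.2) ∪
    (S ×ˢ univ ×ˢ univ).image (fun x ↦ ((ρ x.1)⁻¹ : GL ι K) x.2.1 x.2.2)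
  let A := Algebra.adjoin ℤ (entries : Set K)
  have hrange : ρ.range ≤ (map (algebraMap A K)).range := by
    rw [MonoidHom.range_eq_map, ← hS, MonoidHom.map_closure, Subgroup.closure_le]
    rintro _ ⟨g, hg, rfl⟩
    refine mem_range_map_of_forall_mem A (fun i j ↦ Algebra.subset_adjoin ?_)
      (fun i j ↦ Algebra.subset_adjoin ?_)
    · exact mem_union_left _ (mem_image.2 ⟨(g, i, j), by simpa using hg, rfl⟩)
    · exact mem_union_right _ (mem_image.2 ⟨(g, i, j), by simpa using hg, rfl⟩)
  have hinj : Function.Injective (map (n := ι) (algebraMap A K)) :=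
    Units.map_injective (Matrix.map_injective Subtype.val_injective)
  refine ⟨A, ⟨entries, rfl⟩, (MonoidHom.ofInjective hinj).symm.toMonoidHom.comp
    (ρ.codRestrict _ fun g ↦ hrange ⟨g, rfl⟩), ?_⟩
  ext g : 1
  simp [MonoidHom.apply_ofInjective_symm]

theorem finite_of_injective_of_isMulTorsion_of_ringHom {A F G : Type*} [CommRing A] [IsDomain A]
    [CommRing F] [Finite F] [Group G] (f : A →+* F) (hf : ∀ r : ℕ, r.Prime → ¬IsNilpotent (r : F))
    (hG : IsMulTorsion G) (ρ : G →* GL ι A) (hρ : Function.Injective ρ) : Finite G := by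
  refine Finite.of_injective _ <| ((map f).comp ρ).injective_of_isMulTorsion hG
    fun g r hr hgr hfg ↦ hρ ?_
  rw [map_one]
  refine Units.ext <| Matrix.eq_one_of_pow_eq_one_of_map_eq_one f (hf r hr) ?_ ?_
  · rw [← Units.val_pow_eq_pow_val, ← map_pow, hgr, map_one, Units.val_one]
  · exact congrArg Units.val hfg

theorem finite_of_injective_of_isMulTorsion {A G : Type*} [CommRing A] [IsDomain A] [CharZero A]
    [Algebra.FiniteType ℤ A] [Group G] (hG : IsMulTorsion G) (ρ : G →* GL ι A)
    (hρ : Function.Injective ρ) : Finite G := by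
  obtain ⟨m₁, m₂, hm₁, hm₂, hm⟩ := exists_isMaximal_natCast_notMem_inf A
  let := Ideal.Quotient.field m₁
  let := Ideal.Quotient.field m₂
  have := finite_of_surjective_of_finiteType_int _ (Ideal.Quotient.mk_surjective (I := m₁))
  have := finite_of_surjective_of_finiteType_int _ (Ideal.Quotient.mk_surjective (I := m₂))
  refine finite_of_injective_of_isMulTorsion_of_ringHom
    ((Ideal.Quotient.mk m₁).prod (Ideal.Quotient.mk m₂)) (fun r hr hnil ↦ hm r hr ?_) hG ρ hρ
  rw [Ideal.mem_inf, ← Ideal.Quotient.eq_zero_iff_mem, ← Ideal.Quotient.eq_zero_iff_mem]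
  simpa [Prod.ext_iff] using hnil.eq_zero

theorem finite_of_injective_of_isMulTorsion_of_fg {K G : Type*} [CommRing K] [IsDomain K]
    [CharZero K] [Group G] [Group.FG G] (hG : IsMulTorsion G) (ρ : G →* GL ι K)
    (hρ : Function.Injective ρ) : Finite G := by
  obtain ⟨A, hA, ρA, hρA⟩ := exists_fg_subalgebra_comp_map_eq ρ
  have := (Subalgebra.fg_iff_finiteType A).1 hA
  refine finite_of_injective_of_isMulTorsion hG ρA
    (Function.Injective.of_comp (f := map (algebraMap A K)) ?_)
  rwa [← MonoidHom.coe_comp, hρA]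

end Matrix.GeneralLinearGroup

/-- Burnside: a finitely generated torsion subgroup of `GL(V)`, `V` a finite-dimensional
vector space over a field of characteristic zero, is finite. -/
theorem stmt_3 {k V : Type*} [Field k] [CharZero k] [AddCommGroup V] [Module k V]
    [FiniteDimensional k V]
    (Γ : Subgroup (LinearMap.GeneralLinearGroup k V))
    (htor : ∀ g ∈ Γ, IsOfFinOrder g)
    (hfg : Group.FG Γ) :
    Finite Γ := by
  let e := (Matrix.GeneralLinearGroup.toLin' (Module.finBasis k V)).symm
  exact Matrix.GeneralLinearGroup.finite_of_injective_of_isMulTorsion_of_fg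
    (fun g ↦ Submonoid.isOfFinOrder_coe.1 (htor g g.2)) (e.toMonoidHom.comp Γ.subtype)
    (e.injective.comp Γ.subtype_injective)
end

section
/- Let $V$ be a finite-dimensional real normed vector space, $X = \mathbb{P}(V)$ with the metric $d(x_1,x_2) = \inf\{\|v_1 - v_2\| : v_i \in x_i, \|v_i\|=1\}$. Let $g$ be a nonzero endomorphism of $V$, $x^+ \in X$, $W$ a hyperplane of $V$, $Y = \mathbb{P}(W)$, and $\varepsilon > 0$. Set $b^\varepsilon = \{x \in X : d(x, x^+) \leq \varepsilon\}$ and $B^\varepsilon = \{x \in X : \delta(x, Y) \geq \varepsilon\}$ where $\delta(x,Y) = \inf_{y \in Y} d(x,y)$. Suppose $\delta(x^+, Y) \geq 6\varepsilon$, $g(B^\varepsilon) \subseteq b^\varepsilon$, and the restriction of the induced map of $g$ to $B^\varepsilon$ is $\varepsilon$-Lipschitz. Then $g$ is proximal, its attracting fixed point $x_g^+$ satisfies $d(x_g^+, x^+) \leq \varepsilon$, and the repelling projective hyperplane $X_g^< = \mathbb{P}(V_g^<)$ satisfies $\delta(X_g^<, B^\varepsilon) > 0$, i.e. $X_g^<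 \cap B^\varepsilon = \emptyset$. -/
open Filter Topology

variable {V : Type*} [NormedAddCommGroup V] [NormedSpace ℝ V]

/-- The distance between two lines (points of `ℙ(V)`), viewed as submodules:
`d(x₁, x₂) = inf {‖v₁ - v₂‖ : vᵢ ∈ xᵢ, ‖vᵢ‖ = 1}`. -/
noncomputable def projDist (x₁ x₂ : Submodule ℝ V) : ℝ :=
  sInf {r : ℝ | ∃ v₁ ∈ x₁, ∃ v₂ ∈ x₂, ‖v₁‖ = 1 ∧ ‖v₂‖ = 1 ∧ r = ‖v₁ - v₂‖}

/-- The distance `δ(x, ℙ(W))` from a line `x` to the projectivization of a subspace `W`. -/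
noncomputable def projDelta (x W : Submodule ℝ V) : ℝ :=
  sInf {r : ℝ | ∃ y : Submodule ℝ V, y ≤ W ∧ Module.finrank ℝ y = 1 ∧ r = projDist x y}

/-- The spectral radius of an endomorphism, via Gelfand's formula; in finite dimension
this is the maximal modulus `λ₁(g)` of the complex eigenvalues of `g`. -/
noncomputable def specRad (g : V →L[ℝ] V) : ℝ :=
  Filter.limsup (fun n : ℕ => ‖g ^ n‖ ^ ((1 : ℝ) / n)) Filter.atTop

/-- `g` is proximal with top (real) eigenvalue `α`, attracting eigenvector `v`, and
invariant complementary hyperplane `W` on which the spectral radius is `< |α|`; this says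
exactly that `α` is the unique eigenvalue of maximal modulus and has multiplicity one. -/
def IsProximalWith (g : V →L[ℝ] V) (α : ℝ) (v : V) (W : Submodule ℝ V) : Prop :=
  v ≠ 0 ∧ g v = α • v ∧ IsCompl (Submodule.span ℝ {v}) W ∧
  ∃ gW : W →L[ℝ] W, (∀ w : W, g (w : V) = (gW w : V)) ∧ specRad gW < |α|

/-- `g` is `ε`-proximal with data `(α, v, W)`: it is proximal, `δ(x_g⁺, X_g^<) ≥ 2ε`,
`g` maps `B_g^ε` into `b_g^ε`, and `g` is `ε`-Lipschitz on `B_g^ε` (in `ℙ(V)`). -/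
def IsEpsProximalWith (g : V →L[ℝ] V) (ε α : ℝ) (v : V) (W : Submodule ℝ V) : Prop :=
  IsProximalWith g α v W ∧ 2 * ε ≤ projDelta (Submodule.span ℝ {v}) W ∧
  (∀ x : Submodule ℝ V, Module.finrank ℝ x = 1 → ε ≤ projDelta x W →
    Submodule.map (g : V →ₗ[ℝ] V) x ≠ ⊥ ∧
      projDist (Submodule.map (g : V →ₗ[ℝ] V) x) (Submodule.span ℝ {v}) ≤ ε) ∧
  (∀ x y : Submodule ℝ V, Module.finrank ℝ x = 1 → Module.finrank ℝ y = 1 →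
    ε ≤ projDelta x W → ε ≤ projDelta y W →
    projDist (Submodule.map (g : V →ₗ[ℝ] V) x) (Submodule.map (g : V →ₗ[ℝ] V) y) ≤
      ε * projDist x y)

/-- `g` is `ε`-proximal. -/
def IsEpsProximal (g : V →L[ℝ] V) (ε : ℝ) : Prop :=
  ∃ α v W, IsEpsProximalWith g ε α v W


/-!
The lines within `ε` of `x⁺` lie in `B^ε`, so `g` maps this ball into itself and contracts it
by the factor `ε < 1`; lifting an orbit to unit vectors gives a Cauchy sequence whose limit `v`
spans a fixed line, `g v = α • v`. Applying the contraction to the lines through `v + w` with `w`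
small shows that modulo `ℝ v` the iterates of `g` shrink like `(ε |α|)ⁿ`. Hence `α` is a simple
eigenvalue, `V = ℝ v ⊕ range (g - α)`, and the spectral radius of `g` on `range (g - α)` is at
most `ε |α| < |α|`. A line of `B^ε` inside `range (g - α)` would have an orbit converging to
`ℝ v` inside this closed hyperplane, which is impossible.
-/

open Module

lemma exists_norm_eq_one_eq_span {x : Submodule ℝ V} (hx : finrank ℝ x = 1) :
    ∃ a : V, ‖a‖ = 1 ∧ x = ℝ ∙ a := by
  have hx0 : x ≠ ⊥ := by rintro rfl; simp at hx
  obtain ⟨w, hw, hw0⟩ := Submodule.exists_mem_ne_zero_of_ne_bot hx0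
  refine ⟨‖w‖⁻¹ • w, norm_smul_inv_norm hw0, ?_⟩
  rw [Submodule.span_singleton_smul_eq (by simpa using hw0)]
  exact eq_span_singleton_of_mem_of_finrank_eq_one hx hw hw0

lemma finrank_span_of_norm_eq_one {a : V} (ha : ‖a‖ = 1) : finrank ℝ (ℝ ∙ a) = 1 :=
  finrank_span_singleton (norm_ne_zero_iff.1 (ha ▸ one_ne_zero))

lemma eq_or_eq_neg_of_mem_span {a u : V} (ha : ‖a‖ = 1) (hu : u ∈ ℝ ∙ a) (hu1 : ‖u‖ = 1) :
    u = a ∨ u = -a := by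
  obtain ⟨c, rfl⟩ := Submodule.mem_span_singleton.1 hu
  rw [norm_smul, ha, mul_one, Real.norm_eq_abs] at hu1
  rcases abs_eq zero_le_one |>.1 hu1 with rfl | rfl <;> simp

lemma projDist_span_span {a b : V} (ha : ‖a‖ = 1) (hb : ‖b‖ = 1) :
    projDist (ℝ ∙ a) (ℝ ∙ b) = min ‖a - b‖ ‖a + b‖ := by
  suffices {r : ℝ | ∃ v₁ ∈ ℝ ∙ a, ∃ v₂ ∈ ℝ ∙ b, ‖v₁‖ = 1 ∧ ‖v₂‖ = 1 ∧ r = ‖v₁ - v₂‖} =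
      {‖a - b‖, ‖a + b‖} by rw [projDist, this, csInf_pair]
  ext r
  constructor
  · rintro ⟨v₁, hv₁, v₂, hv₂, h₁, h₂, rfl⟩
    rcases eq_or_eq_neg_of_mem_span ha hv₁ h₁ with h | h <;>
      rcases eq_or_eq_neg_of_mem_span hb hv₂ h₂ with h' | h' <;> rw [h, h']
    · exact Or.inl rfl
    · rw [sub_neg_eq_add]; exact Or.inr rfl
    · rw [show -a - b = -(a + b) by abel, norm_neg]; exact Or.inr rfl
    · rw [show -a - -b = -(a - b) by abel, norm_neg]; exact Or.inl rfl
  · rintro (rfl | rfl)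
    · exact ⟨a, Submodule.mem_span_singleton_self a, b, Submodule.mem_span_singleton_self b,
        ha, hb, rfl⟩
    · exact ⟨a, Submodule.mem_span_singleton_self a, -b,
        Submodule.neg_mem _ (Submodule.mem_span_singleton_self b), ha, by simpa using hb,
        by rw [sub_neg_eq_add]⟩

section alignTo

variable {E : Type*} [NormedAddCommGroup E]

noncomputable def alignTo (a b : E) : E := if ‖a - b‖ ≤ ‖a + b‖ then b else -b

lemma norm_alignTo (a b : E) : ‖alignTo a b‖ = ‖b‖ := by
  unfold alignTo; split_ifs <;> simp

lemma norm_sub_alignTo (a b : E) : ‖a - alignTo a b‖ = min ‖a - b‖ ‖a + b‖ := by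
  unfold alignTo
  split_ifs with h
  · exact (min_eq_left h).symm
  · rw [min_eq_right (le_of_not_ge h), sub_neg_eq_add]

end alignTo

lemma span_alignTo (a b : V) : ℝ ∙ alignTo a b = ℝ ∙ b := by
  unfold alignTo; split_ifs
  · rfl
  · rw [← Set.neg_singleton, Submodule.span_neg]

lemma projDist_span_span_eq_norm_sub_alignTo {a b : V} (ha : ‖a‖ = 1) (hb : ‖b‖ = 1) :
    projDist (ℝ ∙ a) (ℝ ∙ b) = ‖a - alignTo a b‖ := by
  rw [projDist_span_span ha hb, norm_sub_alignTo]

lemma projDist_span_span_le {a b : V} (ha : ‖a‖ = 1) (hb : ‖b‖ = 1) :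
    projDist (ℝ ∙ a) (ℝ ∙ b) ≤ ‖a - b‖ :=
  (projDist_span_span ha hb).trans_le (min_le_left _ _)

lemma projDist_nonneg (x y : Submodule ℝ V) : 0 ≤ projDist x y :=
  Real.sInf_nonneg (by rintro r ⟨_, _, _, _, _, _, rfl⟩; exact norm_nonneg _)

lemma projDist_self {x : Submodule ℝ V} (hx : finrank ℝ x = 1) : projDist x x = 0 := by
  obtain ⟨a, ha, rfl⟩ := exists_norm_eq_one_eq_span hx
  exact le_antisymm ((projDist_span_span_le ha ha).trans_eq (by simp)) (projDist_nonneg _ _)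

lemma projDist_comm (x y : Submodule ℝ V) : projDist x y = projDist y x := by
  unfold projDist
  congr 1
  ext r
  constructor <;> rintro ⟨v₁, h₁, v₂, h₂, n₁, n₂, rfl⟩ <;>
    exact ⟨v₂, h₂, v₁, h₁, n₂, n₁, norm_sub_rev _ _⟩

lemma projDist_le_two {x y : Submodule ℝ V} (hx : finrank ℝ x = 1) (hy : finrank ℝ y = 1) :
    projDist x y ≤ 2 := by
  obtain ⟨a, ha, rfl⟩ := exists_norm_eq_one_eq_span hx
  obtain ⟨b, hb, rfl⟩ := exists_norm_eq_one_eq_span hy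
  calc projDist (ℝ ∙ a) (ℝ ∙ b) ≤ ‖a - b‖ := projDist_span_span_le ha hb
    _ ≤ ‖a‖ + ‖b‖ := norm_sub_le a b
    _ = 2 := by rw [ha, hb]; norm_num

lemma projDist_triangle {x y z : Submodule ℝ V} (hx : finrank ℝ x = 1)
    (hy : finrank ℝ y = 1) (hz : finrank ℝ z = 1) :
    projDist x z ≤ projDist x y + projDist y z := by
  obtain ⟨a, ha, rfl⟩ := exists_norm_eq_one_eq_span hx
  obtain ⟨b, hb, rfl⟩ := exists_norm_eq_one_eq_span hy
  obtain ⟨c, hc, rfl⟩ := exists_norm_eq_one_eq_span hz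
  set b' := alignTo a b
  have hb' : ‖b'‖ = 1 := (norm_alignTo a b).trans hb
  calc projDist (ℝ ∙ a) (ℝ ∙ c) ≤ ‖a - alignTo b' c‖ := by
        rw [← span_alignTo b' c]; exact projDist_span_span_le ha ((norm_alignTo _ _).trans hc)
    _ ≤ ‖a - b'‖ + ‖b' - alignTo b' c‖ := norm_sub_le_norm_sub_add_norm_sub _ _ _
    _ = projDist (ℝ ∙ a) (ℝ ∙ b) + projDist (ℝ ∙ b) (ℝ ∙ c) := by
        rw [projDist_span_span_eq_norm_sub_alignTo ha hb, ← span_alignTo a b,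
          projDist_span_span_eq_norm_sub_alignTo hb' hc]

lemma eq_of_projDist_eq_zero {x y : Submodule ℝ V} (hx : finrank ℝ x = 1)
    (hy : finrank ℝ y = 1) (h : projDist x y = 0) : x = y := by
  obtain ⟨a, ha, rfl⟩ := exists_norm_eq_one_eq_span hx
  obtain ⟨b, hb, rfl⟩ := exists_norm_eq_one_eq_span hy
  rw [projDist_span_span_eq_norm_sub_alignTo ha hb, norm_sub_eq_zero_iff] at h
  rw [h, span_alignTo]

lemma projDist_span_le_two_mul_norm_sub {v z : V} (hv : ‖v‖ = 1) (hz : z ≠ 0) :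
    projDist (ℝ ∙ z) (ℝ ∙ v) ≤ 2 * ‖z - v‖ := by
  have hz' : 0 < ‖z‖ := norm_pos_iff.2 hz
  have hrescale : ‖‖z‖⁻¹ • z - z‖ = |‖v‖ - ‖z‖| := by
    rw [show ‖z‖⁻¹ • z - z = (‖z‖⁻¹ - 1) • z by rw [sub_smul, one_smul], norm_smul,
      Real.norm_eq_abs, ← abs_norm z, ← abs_mul, abs_norm, sub_mul, inv_mul_cancel₀ hz'.ne', one_mul, hv]
  calc projDist (ℝ ∙ z) (ℝ ∙ v) = projDist (ℝ ∙ (‖z‖⁻¹ • z)) (ℝ ∙ v) := by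
        rw [Submodule.span_singleton_smul_eq (by simpa using hz)]
    _ ≤ ‖‖z‖⁻¹ • z - v‖ := projDist_span_span_le (norm_smul_inv_norm hz) hv
    _ ≤ ‖‖z‖⁻¹ • z - z‖ + ‖z - v‖ := norm_sub_le_norm_sub_add_norm_sub _ _ _
    _ ≤ ‖z - v‖ + ‖z - v‖ := by
        rw [hrescale, norm_sub_rev z v]; gcongr; exact abs_norm_sub_norm_le v z
    _ = 2 * ‖z - v‖ := by ring

lemma norm_mkQ_le_projDist {K y : Submodule ℝ V} (hy : finrank ℝ y = 1) (hyK : y ≤ K) {a : V}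
    (ha : ‖a‖ = 1) : ‖K.mkQ a‖ ≤ projDist (ℝ ∙ a) y := by
  obtain ⟨b, hb, rfl⟩ := exists_norm_eq_one_eq_span hy
  have hb' : alignTo a b ∈ K := hyK (span_alignTo a b ▸ Submodule.mem_span_singleton_self _)
  calc ‖K.mkQ a‖ = ‖K.mkQ (a - alignTo a b)‖ := by
        rw [map_sub, Submodule.mkQ_apply (x := alignTo a b),
          (Submodule.Quotient.mk_eq_zero K).2 hb', sub_zero]
    _ ≤ ‖a - alignTo a b‖ := Submodule.Quotient.norm_mk_le K _
    _ = projDist (ℝ ∙ a) (ℝ ∙ b) := (projDist_span_span_eq_norm_sub_alignTo ha hb).symm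

lemma norm_mkQ_le_norm_mul_projDist {v : V} (hv : ‖v‖ = 1) (z : V) :
    ‖(ℝ ∙ v).mkQ z‖ ≤ ‖z‖ * projDist (ℝ ∙ z) (ℝ ∙ v) := by
  rcases eq_or_ne z 0 with rfl | hz
  · simp
  have hv0 : v ≠ 0 := by rintro rfl; simp at hv
  have h := norm_mkQ_le_projDist (finrank_span_singleton hv0) le_rfl (a := ‖z‖⁻¹ • z)
    (norm_smul_inv_norm hz)
  rw [Submodule.span_singleton_smul_eq (by simpa using hz), map_smul, norm_smul, norm_inv,
    norm_norm] at h
  rwa [inv_mul_le_iff₀ (norm_pos_iff.2 hz)] at h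

lemma projDelta_le_projDist {x y W : Submodule ℝ V} (hyW : y ≤ W) (hy : finrank ℝ y = 1) :
    projDelta x W ≤ projDist x y :=
  csInf_le ⟨0, by rintro r ⟨y', _, _, rfl⟩; exact projDist_nonneg _ _⟩ ⟨y, hyW, hy, rfl⟩

lemma exists_line_le_of_projDelta_pos {x W : Submodule ℝ V} (h : 0 < projDelta x W) :
    ∃ y ≤ W, finrank ℝ y = 1 := by
  by_contra! hW
  have hempty : {r : ℝ | ∃ y : Submodule ℝ V, y ≤ W ∧ finrank ℝ y = 1 ∧ r = projDist x y} = ∅ :=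
    Set.eq_empty_of_forall_notMem (by rintro r ⟨y, hyW, hy, -⟩; exact hW y hyW hy)
  rw [projDelta, hempty, Real.sInf_empty] at h
  exact lt_irrefl 0 h

lemma projDelta_le_projDist_add_projDelta {x x' W : Submodule ℝ V} (hx : finrank ℝ x = 1)
    (hx' : finrank ℝ x' = 1) (hW : ∃ y ≤ W, finrank ℝ y = 1) :
    projDelta x W ≤ projDist x x' + projDelta x' W := by
  obtain ⟨y₀, hy₀W, hy₀⟩ := hW
  rw [← sub_le_iff_le_add']
  refine le_csInf ⟨_, y₀, hy₀W, hy₀, rfl⟩ ?_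
  rintro r ⟨y, hyW, hy, rfl⟩
  linarith [projDelta_le_projDist (x := x) hyW hy, projDist_triangle hx hx' hy]

lemma finrank_map_eq_one {x : Submodule ℝ V} (hx : finrank ℝ x = 1) {f : V →ₗ[ℝ] V}
    (hf : Submodule.map f x ≠ ⊥) : finrank ℝ (Submodule.map f x) = 1 := by
  obtain ⟨a, -, rfl⟩ := exists_norm_eq_one_eq_span hx
  rw [Submodule.map_span, Set.image_singleton] at hf ⊢
  exact finrank_span_singleton (by simpa using hf)

/-- The paper's `b^r`, with centre `x₀`. -/
def projClosedBall (x₀ : Submodule ℝ V) (r : ℝ) : Set (Submodule ℝ V) :=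
  {x | finrank ℝ x = 1 ∧ projDist x x₀ ≤ r}

/-- The paper's `B^r`, with `Y = ℙ(W)`. -/
def projFarFrom (W : Submodule ℝ V) (r : ℝ) : Set (Submodule ℝ V) :=
  {x | finrank ℝ x = 1 ∧ r ≤ projDelta x W}

lemma projClosedBall_subset_projFarFrom {x₀ W : Submodule ℝ V} (hx₀ : finrank ℝ x₀ = 1)
    (hW : ∃ y ≤ W, finrank ℝ y = 1) {r c : ℝ} (h : r + c ≤ projDelta x₀ W) :
    projClosedBall x₀ r ⊆ projFarFrom W c := fun x hx =>
  ⟨hx.1, by linarith [projDelta_le_projDist_add_projDelta hx₀ hx.1 hW, projDist_comm x x₀, hx.2]⟩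

lemma exists_unit_lift {x : ℕ → Submodule ℝ V} (hx : ∀ n, finrank ℝ (x n) = 1) :
    ∃ a : ℕ → V, (∀ n, ‖a n‖ = 1 ∧ x n = ℝ ∙ a n) ∧
      ∀ n, ‖a n - a (n + 1)‖ = projDist (x n) (x (n + 1)) := by
  choose c hc using fun n => exists_norm_eq_one_eq_span (hx n)
  let a : ℕ → V := fun n => Nat.rec (c 0) (fun k ak => alignTo ak (c (k + 1))) n
  have ha : ∀ n, ‖a n‖ = 1 ∧ x n = ℝ ∙ a n := by
    intro n
    induction n with
    | zero => exact hc 0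
    | succ n _ =>
      exact ⟨(norm_alignTo _ _).trans (hc _).1, (hc _).2.trans (span_alignTo _ _).symm⟩
  refine ⟨a, ha, fun n => ?_⟩
  rw [(ha n).2, (hc (n + 1)).2, projDist_span_span_eq_norm_sub_alignTo (ha n).1 (hc _).1]

lemma exists_tendsto_projDist_of_le_geometric [CompleteSpace V] {x : ℕ → Submodule ℝ V}
    (hx : ∀ n, finrank ℝ (x n) = 1) {C r : ℝ} (hr : r < 1)
    (h : ∀ n, projDist (x n) (x (n + 1)) ≤ C * r ^ n) :
    ∃ v : V, ‖v‖ = 1 ∧ Tendsto (fun n => projDist (x n) (ℝ ∙ v)) atTop (𝓝 0) := by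
  obtain ⟨a, ha, hda⟩ := exists_unit_lift hx
  obtain ⟨v, hv⟩ := cauchySeq_tendsto_of_complete <|
    cauchySeq_of_le_geometric r C hr fun n => (dist_eq_norm _ _).trans_le ((hda n).trans_le (h n))
  have hv1 : ‖v‖ = 1 :=
    tendsto_nhds_unique hv.norm (by simp only [fun n => (ha n).1]; exact tendsto_const_nhds)
  refine ⟨v, hv1, squeeze_zero (fun n => projDist_nonneg _ _) (fun n => ?_)
    (tendsto_iff_norm_sub_tendsto_zero.1 hv)⟩
  rw [(ha n).2]
  exact projDist_span_span_le (ha n).1 hv1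

theorem exists_fixed_line [CompleteSpace V] {f : Submodule ℝ V → Submodule ℝ V}
    {x₀ : Submodule ℝ V} (hx₀ : finrank ℝ x₀ = 1) {r ε : ℝ} (hr : 0 ≤ r) (hε₀ : 0 ≤ ε)
    (hε₁ : ε < 1) (hf : Set.MapsTo f (projClosedBall x₀ r) (projClosedBall x₀ r))
    (hlip : ∀ x ∈ projClosedBall x₀ r, ∀ y ∈ projClosedBall x₀ r,
      projDist (f x) (f y) ≤ ε * projDist x y) :
    ∃ v : V, ‖v‖ = 1 ∧ ℝ ∙ v ∈ projClosedBall x₀ r ∧ f (ℝ ∙ v) = ℝ ∙ v := by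
  have hmem : ∀ n, f^[n] x₀ ∈ projClosedBall x₀ r :=
    fun n => hf.iterate n ⟨hx₀, (projDist_self hx₀).trans_le hr⟩
  have hstep : ∀ n, projDist (f^[n] x₀) (f^[n + 1] x₀) ≤ 2 * ε ^ n := by
    intro n
    induction n with
    | zero => simpa using projDist_le_two (hmem 0).1 (hmem 1).1
    | succ n ih =>
      rw [Function.iterate_succ_apply', Function.iterate_succ_apply' _ (n + 1)]
      calc _ ≤ ε * projDist (f^[n] x₀) (f^[n + 1] x₀) := hlip _ (hmem n) _ (hmem (n + 1))
        _ ≤ ε * (2 * ε ^ n) := by gcongr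
        _ = 2 * ε ^ (n + 1) := by ring
  obtain ⟨v, hv, hlim⟩ :=
    exists_tendsto_projDist_of_le_geometric (fun n => (hmem n).1) hε₁ hstep
  have hvline := finrank_span_of_norm_eq_one hv
  have hvB : ℝ ∙ v ∈ projClosedBall x₀ r := ⟨hvline, le_of_forall_pos_lt_add fun η hη => by
    obtain ⟨n, hn⟩ := (hlim.eventually (gt_mem_nhds hη)).exists
    linarith [projDist_triangle hvline (hmem n).1 hx₀, projDist_comm (ℝ ∙ v) (f^[n] x₀),
      (hmem n).2]⟩
  have hbound : ∀ n, projDist (f (ℝ ∙ v)) (ℝ ∙ v) ≤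
      ε * projDist (f^[n] x₀) (ℝ ∙ v) + projDist (f^[n + 1] x₀) (ℝ ∙ v) := by
    intro n
    rw [Function.iterate_succ_apply']
    calc _ ≤ projDist (f (ℝ ∙ v)) (f (f^[n] x₀)) + projDist (f (f^[n] x₀)) (ℝ ∙ v) :=
          projDist_triangle (hf hvB).1 (hf (hmem n)).1 hvline
      _ ≤ _ := by
          gcongr
          rw [projDist_comm (f^[n] x₀)]
          exact hlip _ hvB _ (hmem n)
  have hzero : Tendsto (fun n => ε * projDist (f^[n] x₀) (ℝ ∙ v) +
      projDist (f^[n + 1] x₀) (ℝ ∙ v)) atTop (𝓝 0) := by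
    simpa using (hlim.const_mul ε).add (hlim.comp (tendsto_add_atTop_nat 1))
  exact ⟨v, hv, hvB, eq_of_projDist_eq_zero (hf hvB).1 hvline
    (le_antisymm (ge_of_tendsto' hzero hbound) (projDist_nonneg _ _))⟩

lemma iterate_map_span (g : V →L[ℝ] V) (z : V) (n : ℕ) :
    (Submodule.map (g : V →ₗ[ℝ] V))^[n] (ℝ ∙ z) = ℝ ∙ (g ^ n) z := by
  induction n with
  | zero => simp
  | succ n ih =>
    rw [Function.iterate_succ_apply', ih, Submodule.map_span, Set.image_singleton, pow_succ',
      mul_apply_eq_comp]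
    rfl

lemma pow_apply_of_apply_eq_smul {g : V →L[ℝ] V} {v : V} {α : ℝ} (hα : g v = α • v) (n : ℕ) :
    (g ^ n) v = α ^ n • v := by
  induction n with
  | zero => simp
  | succ n ih =>
    rw [pow_succ', mul_apply_eq_comp, ih, map_smul, hα, smul_smul, pow_succ]

lemma pow_apply_mem_span {g : V →L[ℝ] V} {v : V} {α : ℝ} (hα : g v = α • v) (n : ℕ) {p : V}
    (hp : p ∈ ℝ ∙ v) : (g ^ n) p ∈ ℝ ∙ v := by
  obtain ⟨c, rfl⟩ := Submodule.mem_span_singleton.1 hp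
  rw [map_smul, pow_apply_of_apply_eq_smul hα]
  exact Submodule.smul_mem _ _ (Submodule.smul_mem _ _ (Submodule.mem_span_singleton_self v))

lemma specRad_le_of_norm_pow_le {f : V →L[ℝ] V} {C r : ℝ} (hr : 0 ≤ r)
    (h : ∀ n : ℕ, ‖f ^ n‖ ≤ C * r ^ n) : specRad f ≤ r := by
  set C' := |C| + 1
  have hC' : 0 < C' := by positivity
  have hlim : Tendsto (fun n : ℕ => C' ^ ((1 : ℝ) / n) * r) atTop (𝓝 r) := by
    simpa using ((Real.continuousAt_const_rpow hC'.ne').tendsto.comp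
      tendsto_one_div_atTop_nhds_zero_nat).mul_const r
  have hle : ∀ᶠ n : ℕ in atTop, ‖f ^ n‖ ^ ((1 : ℝ) / n) ≤ C' ^ ((1 : ℝ) / n) * r := by
    filter_upwards [eventually_ne_atTop 0] with n hn
    calc ‖f ^ n‖ ^ ((1 : ℝ) / n) ≤ (C' * r ^ n) ^ ((1 : ℝ) / n) := by
          gcongr
          exact (h n).trans (by gcongr; exact (le_abs_self C).trans (by linarith))
      _ = C' ^ ((1 : ℝ) / n) * r := by
          rw [Real.mul_rpow hC'.le (by positivity), ← Real.rpow_natCast, ← Real.rpow_mul hr,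
            mul_one_div_cancel (by exact_mod_cast hn), Real.rpow_one]
  calc specRad f ≤ limsup (fun n : ℕ => C' ^ ((1 : ℝ) / n) * r) atTop :=
        limsup_le_limsup hle (isCoboundedUnder_le_of_le atTop fun n => by positivity)
          hlim.isBoundedUnder_le
    _ = r := hlim.limsup_eq

structure IsAttractingLine (g : V →L[ℝ] V) (v : V) (ε ρ : ℝ) (B : Set (Submodule ℝ V)) :
    Prop where
  norm_eq_one : ‖v‖ = 1
  nonneg : 0 ≤ ε
  lt_one : ε < 1
  pos : 0 < ρ
  finrank_eq_one : ∀ x ∈ B, finrank ℝ x = 1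
  mapsTo : Set.MapsTo (Submodule.map (g : V →ₗ[ℝ] V)) B B
  contract : ∀ x ∈ B,
    projDist (Submodule.map (g : V →ₗ[ℝ] V) x) (ℝ ∙ v) ≤ ε * projDist x (ℝ ∙ v)
  projClosedBall_subset : projClosedBall (ℝ ∙ v) ρ ⊆ B

namespace IsAttractingLine

variable {g : V →L[ℝ] V} {v : V} {ε ρ α : ℝ} {B : Set (Submodule ℝ V)}

lemma span_mem (h : IsAttractingLine g v ε ρ B) : ℝ ∙ v ∈ B :=
  h.projClosedBall_subset ⟨finrank_span_of_norm_eq_one h.norm_eq_one,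
    (projDist_self (finrank_span_of_norm_eq_one h.norm_eq_one)).trans_le h.pos.le⟩

lemma exists_eigenvalue (h : IsAttractingLine g v ε ρ B) : ∃ α : ℝ, α ≠ 0 ∧ g v = α • v := by
  have hline := h.finrank_eq_one _ (h.mapsTo h.span_mem)
  have hfix : Submodule.map (g : V →ₗ[ℝ] V) (ℝ ∙ v) = ℝ ∙ v := by
    refine eq_of_projDist_eq_zero hline (finrank_span_of_norm_eq_one h.norm_eq_one)
      (le_antisymm ((h.contract _ h.span_mem).trans_eq ?_) (projDist_nonneg _ _))
    rw [projDist_self (finrank_span_of_norm_eq_one h.norm_eq_one), mul_zero]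
  obtain ⟨α, hα⟩ := Submodule.mem_span_singleton.1
    (hfix ▸ Submodule.mem_map_of_mem (Submodule.mem_span_singleton_self v))
  refine ⟨α, ?_, hα.symm⟩
  rintro rfl
  have hgv : g v = 0 := by simpa using hα.symm
  simp only [Submodule.map_span, Set.image_singleton, ContinuousLinearMap.coe_coe, hgv,
    Submodule.span_zero_singleton] at hfix
  have hv := finrank_span_of_norm_eq_one h.norm_eq_one
  rw [← hfix, finrank_bot] at hv
  exact zero_ne_one hv

lemma projDist_iterate_le (h : IsAttractingLine g v ε ρ B) {x : Submodule ℝ V} (hx : x ∈ B)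
    (n : ℕ) : projDist ((Submodule.map (g : V →ₗ[ℝ] V))^[n] x) (ℝ ∙ v) ≤
      ε ^ n * projDist x (ℝ ∙ v) := by
  induction n with
  | zero => simp
  | succ n ih =>
    rw [Function.iterate_succ_apply', pow_succ', mul_assoc]
    exact (h.contract _ (h.mapsTo.iterate n hx)).trans (mul_le_mul_of_nonneg_left ih h.nonneg)

lemma norm_mkQ_pow_apply_le_of_norm_le (h : IsAttractingLine g v ε ρ B) (hα : g v = α • v)
    {n : ℕ} {w : V} (hwρ : 2 * ‖w‖ ≤ ρ) (hw1 : ‖w‖ < 1) (hgw : ‖(g ^ n) w‖ ≤ |α| ^ n) :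
    ‖(ℝ ∙ v).mkQ ((g ^ n) w)‖ ≤ 4 * (ε * |α|) ^ n * ‖w‖ := by
  have hz : v + w ≠ 0 := by
    intro h0
    have := congrArg norm (eq_neg_of_add_eq_zero_left h0)
    rw [h.norm_eq_one, norm_neg] at this
    linarith
  have hzv : projDist (ℝ ∙ (v + w)) (ℝ ∙ v) ≤ 2 * ‖w‖ := by
    simpa using projDist_span_le_two_mul_norm_sub h.norm_eq_one hz
  have hzB : ℝ ∙ (v + w) ∈ B :=
    h.projClosedBall_subset ⟨finrank_span_singleton hz, hzv.trans hwρ⟩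
  have hgz : (g ^ n) (v + w) = α ^ n • v + (g ^ n) w := by
    rw [map_add, pow_apply_of_apply_eq_smul hα]
  have hmk : (ℝ ∙ v).mkQ ((g ^ n) (v + w)) = (ℝ ∙ v).mkQ ((g ^ n) w) := by
    rw [hgz, map_add, Submodule.mkQ_apply, (Submodule.Quotient.mk_eq_zero _).2
      (Submodule.smul_mem _ _ (Submodule.mem_span_singleton_self v)), zero_add]
  have hnorm : ‖(g ^ n) (v + w)‖ ≤ 2 * |α| ^ n := by
    rw [hgz]
    calc ‖α ^ n • v + (g ^ n) w‖ ≤ ‖α ^ n • v‖ + ‖(g ^ n) w‖ := norm_add_le _ _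
      _ ≤ |α| ^ n + |α| ^ n := by
          rw [norm_smul, h.norm_eq_one, norm_pow, Real.norm_eq_abs, mul_one]
          gcongr
      _ = 2 * |α| ^ n := by ring
  have hdist := h.projDist_iterate_le hzB n
  rw [iterate_map_span] at hdist
  calc ‖(ℝ ∙ v).mkQ ((g ^ n) w)‖
      ≤ ‖(g ^ n) (v + w)‖ * projDist (ℝ ∙ (g ^ n) (v + w)) (ℝ ∙ v) :=
        hmk ▸ norm_mkQ_le_norm_mul_projDist h.norm_eq_one _
    _ ≤ (2 * |α| ^ n) * (ε ^ n * (2 * ‖w‖)) := by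
        gcongr
        · exact projDist_nonneg _ _
        · exact hdist.trans (mul_le_mul_of_nonneg_left hzv (pow_nonneg h.nonneg n))
    _ = 4 * (ε * |α|) ^ n * ‖w‖ := by ring

lemma norm_mkQ_pow_apply_le (h : IsAttractingLine g v ε ρ B) (hα : g v = α • v)
    (hα0 : α ≠ 0) (n : ℕ) (w : V) :
    ‖(ℝ ∙ v).mkQ ((g ^ n) w)‖ ≤ 4 * (ε * |α|) ^ n * ‖w‖ := by
  rcases eq_or_ne w 0 with rfl | hw
  · simp
  have hw' : 0 < ‖w‖ := norm_pos_iff.2 hw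
  -- by homogeneity it suffices to treat `t • w`, of norm `δ`
  set δ := min (min ρ 1 / 2) (|α| ^ n / (‖g ^ n‖ + 1))
  have hδ : 0 < δ := lt_min (half_pos (lt_min h.pos one_pos)) (by positivity)
  have hδρ : δ ≤ min ρ 1 / 2 := min_le_left _ _
  have hδg : ‖g ^ n‖ * δ ≤ |α| ^ n := by
    calc ‖g ^ n‖ * δ ≤ (‖g ^ n‖ + 1) * (|α| ^ n / (‖g ^ n‖ + 1)) := by
          gcongr
          · linarith
          · exact min_le_right _ _
      _ = |α| ^ n := by field_simp
  set t := δ / ‖w‖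
  have ht : 0 < t := div_pos hδ hw'
  have htw : ‖t • w‖ = δ := by rw [norm_smul, Real.norm_of_nonneg ht.le, div_mul_cancel₀ _ hw'.ne']
  have key := h.norm_mkQ_pow_apply_le_of_norm_le hα (n := n) (w := t • w)
    (by linarith [min_le_left ρ 1]) (by linarith [min_le_right ρ 1])
    ((ContinuousLinearMap.le_opNorm _ _).trans (htw ▸ hδg))
  rw [map_smul, map_smul, norm_smul, norm_smul, Real.norm_of_nonneg ht.le, mul_left_comm] at key
  exact le_of_mul_le_mul_left key ht

lemma norm_mkQ_pow_apply_le_norm_mkQ [FiniteDimensional ℝ V] (h : IsAttractingLine g v ε ρ B)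
    (hα : g v = α • v) (hα0 : α ≠ 0) (n : ℕ) (u : V) :
    ‖(ℝ ∙ v).mkQ ((g ^ n) u)‖ ≤ 4 * (ε * |α|) ^ n * ‖(ℝ ∙ v).mkQ u‖ := by
  obtain ⟨p, hp, hdist⟩ := (Submodule.closed_of_finiteDimensional (ℝ ∙ v)).exists_infDist_eq_dist
    ⟨0, Submodule.zero_mem _⟩ u
  calc ‖(ℝ ∙ v).mkQ ((g ^ n) u)‖ = ‖(ℝ ∙ v).mkQ ((g ^ n) (u - p))‖ := by
        rw [map_sub, map_sub, Submodule.mkQ_apply (x := (g ^ n) p),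
          (Submodule.Quotient.mk_eq_zero _).2 (pow_apply_mem_span hα n hp), sub_zero]
    _ ≤ 4 * (ε * |α|) ^ n * ‖u - p‖ := h.norm_mkQ_pow_apply_le hα hα0 n _
    _ = 4 * (ε * |α|) ^ n * ‖(ℝ ∙ v).mkQ u‖ := by
        rw [← dist_eq_norm, ← hdist, Submodule.mkQ_apply]
        exact congrArg _ (QuotientAddGroup.norm_mk (S := (ℝ ∙ v).toAddSubgroup) u).symm

lemma mem_span_of_sub_smul_mem [FiniteDimensional ℝ V] (h : IsAttractingLine g v ε ρ B)
    (hα : g v = α • v) (hα0 : α ≠ 0) {q : V} (hq : g q - α • q ∈ ℝ ∙ v) : q ∈ ℝ ∙ v := by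
  have hpow : ∀ n : ℕ, (ℝ ∙ v).mkQ ((g ^ n) q) = α ^ n • (ℝ ∙ v).mkQ q := by
    intro n
    induction n with
    | zero => simp
    | succ n ih =>
      rw [pow_succ, mul_apply_eq_comp, show g q = α • q + (g q - α • q) by abel, map_add,
        map_smul, map_add, map_smul, ih, Submodule.mkQ_apply (x := (g ^ n) _),
        (Submodule.Quotient.mk_eq_zero _).2 (pow_apply_mem_span hα n hq), add_zero, smul_smul,
        pow_succ, mul_comm]
  obtain ⟨n, hn⟩ := exists_pow_lt_of_lt_one (by norm_num : (0 : ℝ) < 1 / 4) h.lt_one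
  have hle := h.norm_mkQ_pow_apply_le_norm_mkQ hα hα0 n q
  rw [hpow, norm_smul, norm_pow, Real.norm_eq_abs, mul_pow] at hle
  have hαn : 0 < |α| ^ n := by positivity
  have hzero : ‖(ℝ ∙ v).mkQ q‖ = 0 := by
    by_contra hne
    have hN : 0 < ‖(ℝ ∙ v).mkQ q‖ := (norm_nonneg _).lt_of_ne' hne
    nlinarith [mul_pos hαn hN]
  have : IsClosed ((ℝ ∙ v : Submodule ℝ V) : Set V) := Submodule.closed_of_finiteDimensional _
  exact (QuotientAddGroup.norm_mk_eq_zero (S := (ℝ ∙ v).toAddSubgroup)).1 hzero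

lemma isCompl_span_range_sub_smul [FiniteDimensional ℝ V] (h : IsAttractingLine g v ε ρ B)
    (hα : g v = α • v) (hα0 : α ≠ 0) :
    IsCompl (ℝ ∙ v) (LinearMap.range ((g : V →ₗ[ℝ] V) - α • LinearMap.id)) := by
  set T := (g : V →ₗ[ℝ] V) - α • LinearMap.id
  have hT : ∀ q, T q = g q - α • q := fun q => rfl
  have hker : LinearMap.ker T = ℝ ∙ v := by
    refine le_antisymm (fun q hq => h.mem_span_of_sub_smul_mem hα hα0 ?_) ?_
    · rw [← hT, LinearMap.mem_ker.1 hq]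
      exact Submodule.zero_mem _
    · rw [Submodule.span_le, Set.singleton_subset_iff, SetLike.mem_coe, LinearMap.mem_ker, hT,
        hα, sub_self]
  have hv0 : v ≠ 0 := norm_ne_zero_iff.1 (h.norm_eq_one ▸ one_ne_zero)
  have hv : v ∉ LinearMap.range T := by
    rintro ⟨q, hq⟩
    have hqv : q ∈ ℝ ∙ v := h.mem_span_of_sub_smul_mem hα hα0 (by
      rw [← hT, hq]
      exact Submodule.mem_span_singleton_self v)
    exact hv0 (hq ▸ LinearMap.mem_ker.1 (hker.symm ▸ hqv))
  refine (Submodule.isCompl_iff_disjoint _ _ ?_).2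
    ((Submodule.disjoint_span_singleton' hv0).2 hv).symm
  rw [← LinearMap.finrank_range_add_finrank_ker T, hker, add_comm]

lemma specRad_restrict_lt [FiniteDimensional ℝ V] (h : IsAttractingLine g v ε ρ B)
    (hα : g v = α • v) (hα0 : α ≠ 0) {W' : Submodule ℝ V} (hcompl : IsCompl (ℝ ∙ v) W')
    (hW' : ∀ w ∈ W', g w ∈ W') : specRad (g.restrict hW') < |α| := by
  have : IsClosed ((ℝ ∙ v : Submodule ℝ V) : Set V) := Submodule.closed_of_finiteDimensional _
  set e : (V ⧸ ℝ ∙ v) →L[ℝ] W' := LinearMap.toContinuousLinearMap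
    (Submodule.quotientEquivOfIsCompl _ _ hcompl : (V ⧸ ℝ ∙ v) →ₗ[ℝ] W')
  have hpow : ∀ n (w : W'), (((g.restrict hW') ^ n) w : V) = (g ^ n) w := by
    intro n
    induction n with
    | zero => simp
    | succ n ih =>
      intro w
      rw [pow_succ, mul_apply_eq_comp, ih, ContinuousLinearMap.coe_restrict_apply, pow_succ,
        mul_apply_eq_comp]
  have hbound : ∀ n : ℕ, ‖(g.restrict hW') ^ n‖ ≤ (‖e‖ * 4) * (ε * |α|) ^ n := by
    intro n
    refine ContinuousLinearMap.opNorm_le_bound _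
      (mul_nonneg (by positivity) (pow_nonneg (mul_nonneg h.nonneg (abs_nonneg α)) n)) fun w => ?_
    have hmem : (g ^ n) w ∈ W' := hpow n w ▸ ((g.restrict hW' ^ n) w).2
    have heq : ((g.restrict hW') ^ n) w = e ((ℝ ∙ v).mkQ ((g ^ n) w)) := by
      rw [Submodule.mkQ_apply, LinearMap.coe_toContinuousLinearMap', LinearEquiv.coe_coe,
        Submodule.quotientEquivOfIsCompl_apply_mk_right hcompl ⟨_, hmem⟩]
      exact Subtype.ext (hpow n w)
    calc ‖((g.restrict hW') ^ n) w‖ ≤ ‖e‖ * ‖(ℝ ∙ v).mkQ ((g ^ n) w)‖ := heq ▸ e.le_opNorm _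
      _ ≤ ‖e‖ * (4 * (ε * |α|) ^ n * ‖(w : V)‖) := by
          gcongr
          exact h.norm_mkQ_pow_apply_le hα hα0 n w
      _ = ‖e‖ * 4 * (ε * |α|) ^ n * ‖w‖ := by rw [Submodule.coe_norm]; ring
  have hlt : ε * |α| < |α| := mul_lt_of_lt_one_left (abs_pos.2 hα0) h.lt_one
  exact (specRad_le_of_norm_pow_le (mul_nonneg h.nonneg (abs_nonneg α)) hbound).trans_lt hlt

lemma not_le_of_mem [FiniteDimensional ℝ V] (h : IsAttractingLine g v ε ρ B)
    {W' : Submodule ℝ V} (hcompl : IsCompl (ℝ ∙ v) W') (hW' : ∀ w ∈ W', g w ∈ W')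
    {x : Submodule ℝ V} (hx : x ∈ B) : ¬ x ≤ W' := by
  intro hxW
  have hle : ∀ n, (Submodule.map (g : V →ₗ[ℝ] V))^[n] x ≤ W' := by
    intro n
    induction n with
    | zero => exact hxW
    | succ n ih =>
      rw [Function.iterate_succ_apply', Submodule.map_le_iff_le_comap]
      exact fun w hw => hW' w (ih hw)
  have hbound : ∀ n, ‖W'.mkQ v‖ ≤ 2 * ε ^ n := fun n =>
    calc ‖W'.mkQ v‖ ≤ projDist (ℝ ∙ v) ((Submodule.map (g : V →ₗ[ℝ] V))^[n] x) :=
          norm_mkQ_le_projDist (h.finrank_eq_one _ (h.mapsTo.iterate n hx)) (hle n) h.norm_eq_one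
      _ ≤ ε ^ n * projDist x (ℝ ∙ v) := by rw [projDist_comm]; exact h.projDist_iterate_le hx n
      _ ≤ ε ^ n * 2 := mul_le_mul_of_nonneg_left
          (projDist_le_two (h.finrank_eq_one _ hx) (finrank_span_of_norm_eq_one h.norm_eq_one))
          (pow_nonneg h.nonneg n)
      _ = 2 * ε ^ n := mul_comm _ _
  have hzero : ‖W'.mkQ v‖ = 0 := le_antisymm (ge_of_tendsto' (by
    simpa using (tendsto_pow_atTop_nhds_zero_of_lt_one h.nonneg h.lt_one).const_mul 2) hbound)
    (norm_nonneg _)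
  have : IsClosed (W' : Set V) := Submodule.closed_of_finiteDimensional _
  have hvW : v ∈ W' := (QuotientAddGroup.norm_mk_eq_zero (S := W'.toAddSubgroup)).1 hzero
  have hv0 : v ≠ 0 := norm_ne_zero_iff.1 (h.norm_eq_one ▸ one_ne_zero)
  exact hv0 ((Submodule.disjoint_def.1 hcompl.disjoint) v (Submodule.mem_span_singleton_self v) hvW)

theorem exists_isProximalWith [FiniteDimensional ℝ V] (h : IsAttractingLine g v ε ρ B) :
    ∃ α W', IsProximalWith g α v W' ∧ ∀ x ∈ B, ¬ x ≤ W' := by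
  obtain ⟨α, hα0, hα⟩ := h.exists_eigenvalue
  have hW' : ∀ w ∈ LinearMap.range ((g : V →ₗ[ℝ] V) - α • LinearMap.id),
      g w ∈ LinearMap.range ((g : V →ₗ[ℝ] V) - α • LinearMap.id) := by
    rintro _ ⟨q, rfl⟩
    exact ⟨g q, by simp⟩
  have hcompl := h.isCompl_span_range_sub_smul hα hα0
  exact ⟨α, _, ⟨norm_ne_zero_iff.1 (h.norm_eq_one ▸ one_ne_zero), hα, hcompl, g.restrict hW',
    fun w => rfl, h.specRad_restrict_lt hα hα0 hcompl hW'⟩,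
    fun x hx => h.not_le_of_mem hcompl hW' hx⟩

end IsAttractingLine

theorem stmt_13_general [FiniteDimensional ℝ V] (g : V →L[ℝ] V) (ε : ℝ) (hε : 0 < ε)
    (xplus : Submodule ℝ V) (hxplus : Module.finrank ℝ xplus = 1)
    (W : Submodule ℝ V)
    (hsep : 6 * ε ≤ projDelta xplus W)
    (hmap : ∀ x : Submodule ℝ V, Module.finrank ℝ x = 1 → ε ≤ projDelta x W →
      Submodule.map (g : V →ₗ[ℝ] V) x ≠ ⊥ ∧
        projDist (Submodule.map (g : V →ₗ[ℝ] V) x) xplus ≤ ε)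
    (hlip : ∀ x y : Submodule ℝ V, Module.finrank ℝ x = 1 → Module.finrank ℝ y = 1 →
      ε ≤ projDelta x W → ε ≤ projDelta y W →
      projDist (Submodule.map (g : V →ₗ[ℝ] V) x) (Submodule.map (g : V →ₗ[ℝ] V) y) ≤
        ε * projDist x y) :
    ∃ (α : ℝ) (v : V) (W' : Submodule ℝ V), IsProximalWith g α v W' ∧
      projDist (Submodule.span ℝ {v}) xplus ≤ ε ∧
      ∀ x : Submodule ℝ V, Module.finrank ℝ x = 1 → x ≤ W' → projDelta x W < ε := by
  have hW := exists_line_le_of_projDelta_pos (x := xplus) (W := W) (by linarith)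
  have hε1 : ε < 1 := by
    obtain ⟨y, hyW, hy⟩ := hW
    linarith [(projDelta_le_projDist (x := xplus) hyW hy).trans (projDist_le_two hxplus hy)]
  have hb : projClosedBall xplus ε ⊆ projFarFrom W ε :=
    projClosedBall_subset_projFarFrom hxplus hW (by linarith)
  have hB : Set.MapsTo (Submodule.map (g : V →ₗ[ℝ] V)) (projFarFrom W ε)
      (projClosedBall xplus ε) := fun x hx =>
    ⟨finrank_map_eq_one hx.1 (hmap x hx.1 hx.2).1, (hmap x hx.1 hx.2).2⟩
  have hlip' : ∀ x ∈ projFarFrom W ε, ∀ y ∈ projFarFrom W ε,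
      projDist (Submodule.map (g : V →ₗ[ℝ] V) x) (Submodule.map (g : V →ₗ[ℝ] V) y) ≤
        ε * projDist x y := fun x hx y hy => hlip x y hx.1 hy.1 hx.2 hy.2
  obtain ⟨v, hv, hvb, hfix⟩ := exists_fixed_line hxplus hε.le hε.le hε1 (hB.mono_left hb)
    fun x hx y hy => hlip' x (hb hx) y (hb hy)
  have hvW : 5 * ε ≤ projDelta (ℝ ∙ v) W :=
    (projClosedBall_subset_projFarFrom hxplus hW (by linarith) hvb).2
  have hattr : IsAttractingLine g v ε (4 * ε) (projFarFrom W ε) :=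
    { norm_eq_one := hv, nonneg := hε.le, lt_one := hε1, pos := by positivity
      finrank_eq_one := fun x hx => hx.1
      mapsTo := fun x hx => hb (hB hx)
      contract := fun x hx => by simpa only [hfix] using hlip' x hx _ (hb hvb)
      projClosedBall_subset := projClosedBall_subset_projFarFrom hvb.1 hW (by linarith) }
  obtain ⟨α, W', hprox, hW'⟩ := hattr.exists_isProximalWith
  exact ⟨α, v, W', hprox, hvb.2, fun x hx hxW => not_le.1 fun hεx => hW' x ⟨hx, hεx⟩ hxW⟩

/-- Lemma 6.2: a sufficient condition for proximality. If `g ≠ 0`, `x⁺` is a line, `W` a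
hyperplane with `δ(x⁺, ℙ(W)) ≥ 6ε`, `g` maps `B^ε = {x : δ(x, ℙ(W)) ≥ ε}` into
`b^ε = {x : d(x, x⁺) ≤ ε}` and is `ε`-Lipschitz on `B^ε`, then `g` is proximal, its
attracting line satisfies `d(x_g⁺, x⁺) ≤ ε`, and its repelling projective hyperplane
misses `B^ε`. -/
theorem stmt_13 [FiniteDimensional ℝ V] (g : V →L[ℝ] V) (hg : g ≠ 0) (ε : ℝ) (hε : 0 < ε)
    (xplus : Submodule ℝ V) (hxplus : Module.finrank ℝ xplus = 1)
    (W : Submodule ℝ V) (hW : Module.finrank ℝ W + 1 = Module.finrank ℝ V)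
    (hsep : 6 * ε ≤ projDelta xplus W)
    (hmap : ∀ x : Submodule ℝ V, Module.finrank ℝ x = 1 → ε ≤ projDelta x W →
      Submodule.map (g : V →ₗ[ℝ] V) x ≠ ⊥ ∧
        projDist (Submodule.map (g : V →ₗ[ℝ] V) x) xplus ≤ ε)
    (hlip : ∀ x y : Submodule ℝ V, Module.finrank ℝ x = 1 → Module.finrank ℝ y = 1 →
      ε ≤ projDelta x W → ε ≤ projDelta y W →
      projDist (Submodule.map (g : V →ₗ[ℝ] V) x) (Submodule.map (g : V →ₗ[ℝ] V) y) ≤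
        ε * projDist x y) :
    ∃ (α : ℝ) (v : V) (W' : Submodule ℝ V), IsProximalWith g α v W' ∧
      projDist (Submodule.span ℝ {v}) xplus ≤ ε ∧
      ∀ x : Submodule ℝ V, Module.finrank ℝ x = 1 → x ≤ W' → projDelta x W < ε :=
  stmt_13_general g ε hε xplus hxplus W hsep hmap hlip
end
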